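/- Let 0 < q < 1, a ∈ ℝ, and u, v > 0 with |a u| < v. Then N_q(e_q(a x))(u;v) = 1/(v - a u), where e_q(t) = ∑_{n≥0} t^n/(q;q)_n and N_q is the series-defined q-Natural transform of the first type. -/

import Mathlib

/-- The q-Pochhammer symbol `(a;q)_n`. -/
noncomputable def qPoch (q a : ℝ) (n : ℕ) : ℝ := ∏ k ∈ Finset.range n, (1 - a * q ^ k)

/-- `(a;q)_∞`. -/
noncomputable def qPochInf (q a : ℝ) : ℝ := ∏' k : ℕ, (1 - a * q ^ k)

/-- The q-exponential `e_q(t) = ∑_{n≥0} t^n/(q;q)_n`. -/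
noncomputable def qExp (q t : ℝ) : ℝ := ∑' n : ℕ, t ^ n / qPoch q q n

/-- The first-type q-Natural transform. -/
noncomputable def qNatural (q : ℝ) (f : ℝ → ℝ) (u v : ℝ) : ℝ :=
  qPochInf q q / v * ∑' k : ℕ, q ^ k * f (u / v * q ^ k) / qPoch q q k

/-! Expanding `e_q(a x)` and exchanging the two sums (absolutely convergent because
`|a u / v| < 1`) turns the transform into `∑ₙ (a u / v)ⁿ / (q;q)ₙ · e_q(q^{n+1})`.
Iterating the functional equation `(1 - z) e_q(z) = e_q(q z)` and letting
`e_q(z q^N) → e_q(0) = 1` gives Euler's identity `e_q(z) (z;q)_∞ = 1`; hence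
`e_q(q^{n+1}) = (q;q)ₙ / (q;q)_∞`, and what is left is a geometric series. -/

open Filter Topology

section

variable {q : ℝ}

theorem abs_mul_pow_le_abs (hq0 : 0 ≤ q) (hq1 : q ≤ 1) (z : ℝ) (n : ℕ) :
    |z * q ^ n| ≤ |z| := by
  rw [abs_mul, abs_of_nonneg (pow_nonneg hq0 n)]
  exact mul_le_of_le_one_right (abs_nonneg z) (pow_le_one₀ hq0 hq1)

theorem qPoch_succ (q a : ℝ) (n : ℕ) : qPoch q a (n + 1) = qPoch q a n * (1 - a * q ^ n) :=
  Finset.prod_range_succ _ n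

theorem qPoch_pos (hq0 : 0 ≤ q) (hq1 : q ≤ 1) {a : ℝ} (ha : |a| < 1) (n : ℕ) :
    0 < qPoch q a n :=
  Finset.prod_pos fun k _ =>
    sub_pos.2 <| (le_abs_self _).trans_lt <| (abs_mul_pow_le_abs hq0 hq1 a k).trans_lt ha

theorem qPoch_self_pos (hq0 : 0 ≤ q) (hq1 : q < 1) (n : ℕ) : 0 < qPoch q q n :=
  qPoch_pos hq0 hq1.le (by rwa [abs_of_nonneg hq0]) n

theorem summable_qExp (hq0 : 0 ≤ q) (hq1 : q < 1) {z : ℝ} (hz : |z| < 1) :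
    Summable fun n : ℕ => z ^ n / qPoch q q n := by
  obtain ⟨r, hzr, hr1⟩ := exists_between hz
  refine summable_of_ratio_norm_eventually_le hr1 ?_
  have hratio : Tendsto (fun n : ℕ => |z| / (1 - q ^ (n + 1))) atTop (𝓝 (|z| / (1 - 0))) :=
    tendsto_const_nhds.div (tendsto_const_nhds.sub
      ((tendsto_pow_atTop_nhds_zero_of_lt_one hq0 hq1).comp (tendsto_add_atTop_nat 1)))
      (by norm_num)
  filter_upwards [hratio.eventually (gt_mem_nhds (by simpa using hzr))] with n hn
  have hp := qPoch_self_pos hq0 hq1 n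
  have hfac : 0 < 1 - q ^ (n + 1) := sub_pos.2 (pow_lt_one₀ hq0 hq1 n.succ_ne_zero)
  rw [qPoch_succ, ← pow_succ', Real.norm_eq_abs, Real.norm_eq_abs, abs_div, abs_div, abs_pow,
    abs_pow, abs_of_pos hp, abs_of_pos (mul_pos hp hfac)]
  calc |z| ^ (n + 1) / (qPoch q q n * (1 - q ^ (n + 1)))
      = |z| / (1 - q ^ (n + 1)) * (|z| ^ n / qPoch q q n) := by
        rw [pow_succ]; field_simp
    _ ≤ r * (|z| ^ n / qPoch q q n) := by gcongr

theorem qExp_zero (q : ℝ) : qExp q 0 = 1 := by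
  rw [qExp, tsum_eq_single 0 fun n hn => by simp [hn]]
  simp [qPoch]

theorem continuousOn_qExp (hq0 : 0 ≤ q) (hq1 : q < 1) :
    ContinuousOn (qExp q) (Metric.ball 0 1) := by
  intro x hx
  rw [mem_ball_zero_iff, Real.norm_eq_abs] at hx
  obtain ⟨r, hxr, hr1⟩ := exists_between hx
  have hr : |r| < 1 := by rwa [abs_of_nonneg ((abs_nonneg x).trans hxr.le)]
  have hcont : ContinuousOn (qExp q) (Metric.closedBall 0 r) :=
    continuousOn_tsum (fun n => by fun_prop) (summable_qExp hq0 hq1 hr) fun n y hy => by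
      rw [mem_closedBall_zero_iff, Real.norm_eq_abs] at hy
      rw [norm_div, norm_pow, Real.norm_eq_abs, Real.norm_of_nonneg (qPoch_self_pos hq0 hq1 n).le]
      gcongr
      exact (qPoch_self_pos hq0 hq1 n).le
  refine (hcont.continuousAt (Metric.closedBall_mem_nhds_of_mem ?_)).continuousWithinAt
  rwa [mem_ball_zero_iff, Real.norm_eq_abs]

theorem one_sub_mul_qExp (hq0 : 0 ≤ q) (hq1 : q < 1) {z : ℝ} (hz : |z| < 1) :
    (1 - z) * qExp q z = qExp q (q * z) := by
  have hs := summable_qExp hq0 hq1 hz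
  have hqs := summable_qExp hq0 hq1 ((abs_mul_pow_le_abs hq0 hq1.le z 1).trans_lt hz)
  rw [pow_one, mul_comm z] at hqs
  suffices qExp q z - qExp q (q * z) = z * qExp q z by linarith
  rw [qExp, qExp, ← hs.tsum_sub hqs, (hs.sub hqs).tsum_eq_zero_add, ← tsum_mul_left]
  simp only [pow_zero, sub_self, zero_add]
  refine tsum_congr fun n => ?_
  have hfac : 1 - q ^ (n + 1) ≠ 0 := (sub_pos.2 (pow_lt_one₀ hq0 hq1 n.succ_ne_zero)).ne'
  rw [qPoch_succ, ← pow_succ', mul_pow]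
  field_simp [(qPoch_self_pos hq0 hq1 n).ne']
  ring

theorem qExp_mul_qPoch (hq0 : 0 ≤ q) (hq1 : q < 1) {z : ℝ} (hz : |z| < 1) (n : ℕ) :
    qExp q z * qPoch q z n = qExp q (z * q ^ n) := by
  induction n with
  | zero => simp [qPoch]
  | succ n ih =>
    rw [qPoch_succ, ← mul_assoc, ih, mul_comm,
      one_sub_mul_qExp hq0 hq1 ((abs_mul_pow_le_abs hq0 hq1.le z n).trans_lt hz), pow_succ]
    ring_nf

theorem multipliable_one_sub_mul_pow (hq0 : 0 ≤ q) (hq1 : q < 1) (z : ℝ) :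
    Multipliable fun k : ℕ => 1 - z * q ^ k := by
  simp_rw [sub_eq_add_neg]
  refine multipliable_one_add_of_summable ?_
  simpa [norm_mul, norm_pow, Real.norm_of_nonneg hq0] using
    (summable_geometric_of_lt_one hq0 hq1).mul_left ‖z‖

theorem qExp_mul_qPochInf (hq0 : 0 ≤ q) (hq1 : q < 1) {z : ℝ} (hz : |z| < 1) :
    qExp q z * qPochInf q z = 1 := by
  have hprod : Tendsto (fun n => qExp q z * qPoch q z n) atTop (𝓝 (qExp q z * qPochInf q z)) :=
    ((multipliable_one_sub_mul_pow hq0 hq1 z).hasProd.tendsto_prod_nat).const_mul _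
  have hone : Tendsto (fun n => qExp q z * qPoch q z n) atTop (𝓝 1) := by
    simp_rw [qExp_mul_qPoch hq0 hq1 hz]
    rw [← qExp_zero q]
    have hcont := (continuousOn_qExp hq0 hq1).continuousAt (Metric.ball_mem_nhds 0 one_pos)
    refine hcont.tendsto.comp ?_
    simpa using (tendsto_pow_atTop_nhds_zero_of_lt_one hq0 hq1).const_mul z
  exact tendsto_nhds_unique hprod hone

theorem qPochInf_ne_zero (hq0 : 0 ≤ q) (hq1 : q < 1) {z : ℝ} (hz : |z| < 1) :
    qPochInf q z ≠ 0 :=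
  right_ne_zero_of_mul_eq_one (qExp_mul_qPochInf hq0 hq1 hz)

theorem qExp_pow_succ (hq0 : 0 ≤ q) (hq1 : q < 1) (n : ℕ) :
    qExp q (q ^ (n + 1)) = qPoch q q n / qPochInf q q := by
  have hq : |q| < 1 := by rwa [abs_of_nonneg hq0]
  rw [pow_succ', ← qExp_mul_qPoch hq0 hq1 hq,
    eq_div_iff (qPochInf_ne_zero hq0 hq1 hq), mul_right_comm,
    qExp_mul_qPochInf hq0 hq1 hq, one_mul]

theorem tsum_pow_mul_qExp_div_qPoch (hq0 : 0 ≤ q) (hq1 : q < 1) {t : ℝ} (ht : |t| < 1) :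
    ∑' k : ℕ, q ^ k * qExp q (t * q ^ k) / qPoch q q k = ((1 - t) * qPochInf q q)⁻¹ := by
  set F : ℝ → ℕ → ℕ → ℝ :=
    fun s n k => s ^ n / qPoch q q n * ((q ^ (n + 1)) ^ k / qPoch q q k)
  have hinner (s : ℝ) (n : ℕ) : HasSum (F s n) (s ^ n / qPochInf q q) := by
    have hqn : |q ^ (n + 1)| < 1 := by
      rw [abs_of_nonneg (pow_nonneg hq0 _)]; exact pow_lt_one₀ hq0 hq1 n.succ_ne_zero
    have h := (summable_qExp hq0 hq1 hqn).hasSum.mul_left (s ^ n / qPoch q q n)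
    rwa [← qExp, qExp_pow_succ hq0 hq1, div_mul_div_cancel₀ (qPoch_self_pos hq0 hq1 n).ne'] at h
  have hF : Summable (Function.uncurry (F t)) := by
    refine Summable.of_norm ?_
    have hnorm : (fun p => ‖Function.uncurry (F t) p‖) = Function.uncurry (F |t|) := by
      ext ⟨n, k⟩
      simp [F, abs_of_nonneg hq0, abs_of_pos (qPoch_self_pos hq0 hq1 _)]
    have hF_nonneg : 0 ≤ Function.uncurry (F |t|) := fun ⟨n, k⟩ => by
      have := qPoch_self_pos hq0 hq1 n
      have := qPoch_self_pos hq0 hq1 k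
      simp only [F, Function.uncurry_apply_pair, Pi.zero_apply]
      positivity
    rw [hnorm, summable_prod_of_nonneg hF_nonneg]
    refine ⟨fun n => (hinner |t| n).summable, ?_⟩
    simp_rw [Function.uncurry_apply_pair, (hinner _ _).tsum_eq]
    exact (summable_geometric_of_lt_one (abs_nonneg t) ht).div_const _
  calc ∑' k : ℕ, q ^ k * qExp q (t * q ^ k) / qPoch q q k
      = ∑' k, ∑' n, F t n k := tsum_congr fun k => ?_
    _ = ∑' n, ∑' k, F t n k := hF.tsum_comm
    _ = ∑' n : ℕ, t ^ n / qPochInf q q := tsum_congr fun n => (hinner t n).tsum_eq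
    _ = ((1 - t) * qPochInf q q)⁻¹ := by
      rw [tsum_div_const, tsum_geometric_of_abs_lt_one ht, div_eq_mul_inv, mul_inv]
  rw [qExp, ← tsum_mul_left, ← tsum_div_const]
  refine tsum_congr fun n => ?_
  field_simp
  ring

end

theorem qNatural_qExp_general (q a u v : ℝ) (hq0 : 0 < q) (hq1 : q < 1)
    (hv : 0 < v) (h : |a * u| < v) :
    qNatural q (fun x => qExp q (a * x)) u v = 1 / (v - a * u) := by
  have ht : |a * u / v| < 1 := by rwa [abs_div, abs_of_pos hv, div_lt_one hv]
  have hvu : v - a * u ≠ 0 := (sub_pos.2 ((le_abs_self _).trans_lt h)).ne'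
  have hc : qPochInf q q ≠ 0 := qPochInf_ne_zero hq0.le hq1 (by rwa [abs_of_pos hq0])
  simp only [qNatural, ← mul_assoc a, mul_div_assoc', tsum_pow_mul_qExp_div_qPoch hq0.le hq1 ht]
  field_simp

/-- For `0 < q < 1`, `u, v > 0` and `|a u| < v`,
`N_q(e_q(a x))(u;v) = 1/(v - a u)`. -/
theorem qNatural_qExp (q a u v : ℝ) (hq0 : 0 < q) (hq1 : q < 1)
    (hu : 0 < u) (hv : 0 < v) (h : |a * u| < v) :
    qNatural q (fun x => qExp q (a * x)) u v = 1 / (v - a * u) :=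
  qNatural_qExp_general q a u v hq0 hq1 hv h
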